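/- Let C be symmetric positive definite and B symmetric positive definite. Define Log_C(B) = (BC)^{1/2} + (CB)^{1/2} − 2C, where (BC)^{1/2} := C^{-1/2}(C^{1/2} B C^{1/2})^{1/2} C^{1/2} and (CB)^{1/2} := C^{1/2}(C^{1/2} B C^{1/2})^{1/2} C^{-1/2}. Then V = Log_C(B) is symmetric, I + L_C[V] is positive definite, and Exp_C(V) = (I + L_C[V]) C (I + L_C[V]) = B. -/

import Mathlib

/-!
With `S = C^{1/2}` and `M = (S B S)^{1/2}`, the matrix `Y = S⁻¹ M S⁻¹` is positive definite and
satisfies `(Y - 1) C + C (Y - 1) = Log_C(B)` and `Y C Y = S⁻¹ M² S⁻¹ = B`. Since `C` is positive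
definite, `X ↦ X C + C X` is injective on symmetric matrices: if `D C + C D = 0` then
`tr (D C D) = tr (D (D C + C D)) / 2 = 0`, so the positive semidefinite `D C D` vanishes, whence
`D² C = -D C D = 0` and `D = 0`. Hence the symmetric solution `X` of `X C + C X = Log_C(B)` is
`Y - 1`.
-/

open Matrix

open scoped ComplexOrder in
/-- The positive semidefinite square root, with its Mathlib (December 2024) definition. -/
noncomputable def Matrix.PosSemidef.sqrt {n 𝕜 : Type*} [Fintype n] [RCLike 𝕜] [DecidableEq n]
    {A : Matrix n n 𝕜} (hA : A.PosSemidef) : Matrix n n 𝕜 :=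
  hA.1.eigenvectorUnitary.1 * diagonal ((↑) ∘ Real.sqrt ∘ hA.1.eigenvalues) *
  (star hA.1.eigenvectorUnitary : Matrix n n 𝕜)

open scoped ComplexOrder in
lemma Matrix.PosSemidef.posSemidef_sqrt {n 𝕜 : Type*} [Fintype n] [RCLike 𝕜] [DecidableEq n]
    {A : Matrix n n 𝕜} (hA : A.PosSemidef) : hA.sqrt.PosSemidef := by
  have hD : (diagonal ((↑) ∘ Real.sqrt ∘ hA.1.eigenvalues) : Matrix n n 𝕜).PosSemidef :=
    posSemidef_diagonal_iff.mpr (fun i => by simp [Real.sqrt_nonneg])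
  have := hD.conjTranspose_mul_mul_same (star (hA.1.eigenvectorUnitary : Matrix n n 𝕜))
  simpa [Matrix.PosSemidef.sqrt, star_eq_conjTranspose, Matrix.mul_assoc] using this

/-- The matrix `A^{1/2} B A^{1/2}` is positive semidefinite. -/
lemma sandwich_psd {n : ℕ} {A B : Matrix (Fin n) (Fin n) ℝ} (hA : A.PosDef) (hB : B.PosSemidef) :
    (hA.posSemidef.sqrt * B * hA.posSemidef.sqrt).PosSemidef := by
  have h := hB.conjTranspose_mul_mul_same hA.posSemidef.sqrt
  rwa [hA.posSemidef.posSemidef_sqrt.isHermitian.eq] at h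

namespace Matrix

section RCLike

variable {n 𝕜 : Type*} [Fintype n] [DecidableEq n] [RCLike 𝕜]

open scoped ComplexOrder

lemma PosSemidef.sqrt_mul_self {A : Matrix n n 𝕜} (hA : A.PosSemidef) :
    hA.sqrt * hA.sqrt = A := by
  set U : Matrix n n 𝕜 := (hA.1.eigenvectorUnitary : Matrix n n 𝕜)
  have hUU : star U * U = 1 := Unitary.coe_star_mul_self _
  have hdiag : (diagonal ((↑) ∘ Real.sqrt ∘ hA.1.eigenvalues) : Matrix n n 𝕜) *
      diagonal ((↑) ∘ Real.sqrt ∘ hA.1.eigenvalues) = diagonal ((↑) ∘ hA.1.eigenvalues) := by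
    rw [diagonal_mul_diagonal]
    congr 1
    ext i
    simp [← RCLike.ofReal_mul, Real.mul_self_sqrt (hA.eigenvalues_nonneg i)]
  calc hA.sqrt * hA.sqrt
      = U * (diagonal ((↑) ∘ Real.sqrt ∘ hA.1.eigenvalues) * (star U * U) *
          diagonal ((↑) ∘ Real.sqrt ∘ hA.1.eigenvalues)) * star U := by
        simp only [PosSemidef.sqrt, U, Matrix.mul_assoc]
    _ = A := by
        rw [hUU, Matrix.mul_one, hdiag]
        conv_rhs => rw [hA.1.spectral_theorem, Unitary.conjStarAlgAut_apply]

lemma PosDef.posDef_sqrt {A : Matrix n n 𝕜} (hA : A.PosDef) : hA.posSemidef.sqrt.PosDef :=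
  hA.posSemidef.posSemidef_sqrt.posDef_iff_isUnit.mpr <|
    isUnit_of_mul_isUnit_left (hA.posSemidef.sqrt_mul_self ▸ hA.isUnit)

lemma IsHermitian.inv_mul_mul_add_mul_mul_inv {S M : Matrix n n 𝕜} (hS : S.IsHermitian)
    (hM : M.IsHermitian) : (S⁻¹ * M * S + S * M * S⁻¹).IsHermitian := by
  simp only [IsHermitian, conjTranspose_add, conjTranspose_mul, conjTranspose_nonsing_inv,
    hS.eq, hM.eq, Matrix.mul_assoc]
  exact add_comm _ _

lemma PosDef.mul_mul_same {M S : Matrix n n 𝕜} (hM : M.PosDef) (hS : S.PosDef) :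
    (S * M * S).PosDef := by
  have h := hM.mul_mul_conjTranspose_same (B := S) (vecMul_injective_iff_isUnit.mpr hS.isUnit)
  rwa [hS.isHermitian.eq] at h

lemma PosDef.eq_zero_of_mul_add_mul_eq_zero {C D : Matrix n n 𝕜} (hC : C.PosDef)
    (hD : D.IsHermitian) (h : D * C + C * D = 0) : D = 0 := by
  have hCD : C * D = -(D * C) := eq_neg_of_add_eq_zero_right h
  have htrace : (D * C * D).trace = 0 := by
    have h2 : (D * (D * C + C * D)).trace = 2 * (D * C * D).trace := by
      rw [Matrix.mul_add, trace_add, ← Matrix.mul_assoc, ← Matrix.mul_assoc, two_mul,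
        ← trace_mul_cycle D C D]
    rw [h, Matrix.mul_zero, trace_zero] at h2
    exact (mul_eq_zero.mp h2.symm).resolve_left two_ne_zero
  have hDCD : D * C * D = 0 := by
    have hpsd := hC.posSemidef.conjTranspose_mul_mul_same D
    rw [hD.eq] at hpsd
    exact hpsd.trace_eq_zero_iff.mp htrace
  have hDD : D * D = 0 := by
    have : D * D * C = 0 := by
      rw [Matrix.mul_assoc, ← neg_eq_zero, ← Matrix.mul_neg, ← hCD, ← Matrix.mul_assoc, hDCD]
    exact hC.isUnit.mul_left_eq_zero.mp this
  rw [← conjTranspose_mul_self_eq_zero, hD.eq, hDD]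

lemma PosDef.eq_of_mul_add_mul_eq {C X Y : Matrix n n 𝕜} (hC : C.PosDef) (hX : X.IsHermitian)
    (hY : Y.IsHermitian) (h : X * C + C * X = Y * C + C * Y) : X = Y := by
  refine sub_eq_zero.mp (hC.eq_zero_of_mul_add_mul_eq_zero (hX.sub hY) ?_)
  rw [Matrix.sub_mul, Matrix.mul_sub, sub_add_sub_comm, h, sub_self]

end RCLike

section Conjugation

variable {n R : Type*} [Fintype n] [DecidableEq n] [CommRing R] {S M : Matrix n n R}

lemma lyapunov_inv_mul_mul_inv_sub_one (hS : IsUnit S.det) :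
    (S⁻¹ * M * S⁻¹ - 1) * (S * S) + S * S * (S⁻¹ * M * S⁻¹ - 1)
      = S⁻¹ * M * S + S * M * S⁻¹ - 2 • (S * S) := by
  simp only [Matrix.sub_mul, Matrix.mul_sub, Matrix.one_mul, Matrix.mul_one, two_smul,
    Matrix.mul_assoc, nonsing_inv_mul_cancel_left _ _ hS, mul_nonsing_inv_cancel_left _ _ hS]
  abel

lemma inv_mul_mul_inv_mul_self_mul_eq {B : Matrix n n R} (hS : IsUnit S.det)
    (hM : M * M = S * B * S) :
    S⁻¹ * M * S⁻¹ * (S * S) * (S⁻¹ * M * S⁻¹) = B := by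
  calc S⁻¹ * M * S⁻¹ * (S * S) * (S⁻¹ * M * S⁻¹) = S⁻¹ * (M * M) * S⁻¹ := by
        simp only [Matrix.mul_assoc, nonsing_inv_mul_cancel_left _ _ hS,
          mul_nonsing_inv_cancel_left _ _ hS]
    _ = B := by
        rw [hM]
        simp only [Matrix.mul_assoc, nonsing_inv_mul_cancel_left _ _ hS,
          mul_nonsing_inv _ hS, Matrix.mul_one]

end Conjugation

end Matrix

/-- `V = Log_C(B) = (BC)^{1/2} + (CB)^{1/2} − 2C` is symmetric, `I + L_C[V]` is
positive definite, and `Exp_C(V) = (I + L_C[V]) C (I + L_C[V]) = B`. -/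
theorem riemannian_log {n : ℕ} {C B : Matrix (Fin n) (Fin n) ℝ}
    (hC : C.PosDef) (hB : B.PosDef) :
    ((hC.posSemidef.sqrt)⁻¹ * (sandwich_psd hC hB.posSemidef).sqrt * hC.posSemidef.sqrt
      + hC.posSemidef.sqrt * (sandwich_psd hC hB.posSemidef).sqrt * (hC.posSemidef.sqrt)⁻¹
      - 2 • C).IsSymm ∧
    ∀ X : Matrix (Fin n) (Fin n) ℝ, X.IsSymm →
      X * C + C * X
        = (hC.posSemidef.sqrt)⁻¹ * (sandwich_psd hC hB.posSemidef).sqrt * hC.posSemidef.sqrt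
          + hC.posSemidef.sqrt * (sandwich_psd hC hB.posSemidef).sqrt * (hC.posSemidef.sqrt)⁻¹
          - 2 • C →
      ((1 : Matrix (Fin n) (Fin n) ℝ) + X).PosDef ∧ (1 + X) * C * (1 + X) = B := by
  set S := hC.posSemidef.sqrt
  set M := (sandwich_psd hC hB.posSemidef).sqrt
  have hS : S.PosDef := hC.posDef_sqrt
  have hSS : S * S = C := hC.posSemidef.sqrt_mul_self
  have hM : M.PosDef := (hB.mul_mul_same hS).posDef_sqrt
  have hMM : M * M = S * B * S := (sandwich_psd hC hB.posSemidef).sqrt_mul_self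
  have hSdet : IsUnit S.det := (isUnit_iff_isUnit_det S).mp hS.isUnit
  refine ⟨isHermitian_iff_isSymm.mp ?_, fun X hX hXV => ?_⟩
  · rw [two_smul]
    exact (hS.isHermitian.inv_mul_mul_add_mul_mul_inv hM.isHermitian).sub
      (hC.isHermitian.add hC.isHermitian)
  have hY : (S⁻¹ * M * S⁻¹).PosDef := hM.mul_mul_same hS.inv
  have hX1 : X = S⁻¹ * M * S⁻¹ - 1 := by
    have hXh : X.IsHermitian := isHermitian_iff_isSymm.mpr hX
    have hYh : (S⁻¹ * M * S⁻¹ - 1).IsHermitian := hY.isHermitian.sub isHermitian_one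
    refine hC.eq_of_mul_add_mul_eq hXh hYh (hXV.trans ?_)
    simp only [← hSS]
    exact (lyapunov_inv_mul_mul_inv_sub_one hSdet).symm
  rw [hX1, add_sub_cancel]
  refine ⟨hY, ?_⟩
  simp only [← hSS]
  exact inv_mul_mul_inv_mul_self_mul_eq hSdet hMM
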